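/- arXiv:1208.2578 — 2 statements merged into one kernel-verified Lean document; each statement's English description precedes it below -/
import Mathlib

section
/- Locality of the graphical construction (Lemma 5.1): let G^U ⊂ ℤ^d × [0,∞) × [0,1] be finite with pairwise distinct times, let G be its projection to ℤ^d × [0,∞), and let x ∈ ℤ^d. Define G^U_{<x} as follows: if G contains no point of the form (x,t), set G^U_{<x} = ∅; otherwise let T_x be the largest time t with (x,t) ∈ G and set G^U_{<x} := {(y,s,u) ∈ G^U : (y,s) = (x,T_x) or (y,s) <_G (x,T_x)}. Then for every η ∈ Ω, Ψ(η,G^U)(x) = Ψ(η,G^U_{<x})(x). -/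
/-- Sites of the lattice `ℤ^d`. -/
abbrev Site (d : ℕ) := Fin d → ℤ

/-- Spin configurations on `ℤ^d`; `true` encodes spin `+1`, `false` encodes spin `-1`. -/
abbrev Config (d : ℕ) := Site d → Bool

/-- A labelled resampling event `(x, t, u)`: site, time, uniform label. -/
abbrev Event (d : ℕ) := Site d × ℝ × ℝ

/-- ℓ¹ distance on `ℤ^d`. -/
def dist1 {d : ℕ} (x y : Site d) : ℤ := ∑ i, |x i - y i|

/-- Single heat-bath resampling step `Ψ(η,(x,u))`. -/
noncomputable def step {d : ℕ} (cplus : Site d → Config d → ℝ) (η : Config d)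
    (x : Site d) (u : ℝ) : Config d :=
  fun y => if y = x then (if u < cplus x η then true else false) else η y

/-- `Ψ(η, G^U)` for a finite labelled event set, represented by a list of events which is
assumed to be sorted by (pairwise distinct) times: the resampling steps are applied
successively, front of the list (earliest time) first. -/
noncomputable def applyEvents {d : ℕ} (cplus : Site d → Config d → ℝ)
    (η : Config d) : List (Event d) → Config d
  | [] => η
  | e :: rest => applyEvents cplus (step cplus η e.1 e.2.2) rest

/-- The projection `G` of a labelled event set `G^U` onto `ℤ^d × [0,∞)`. -/
def projG {d : ℕ} (l : List (Event d)) : Set (Site d × ℝ) :=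
  {p | ∃ u : ℝ, (p.1, p.2, u) ∈ l}

/-- The relation `<_G` on `ℤ^d × [0,∞)`. -/
def rel {d : ℕ} (G : Set (Site d × ℝ)) (p q : Site d × ℝ) : Prop :=
  (p.1 = q.1 ∧ p.2 < q.2) ∨
  ∃ (K : ℕ) (c : Fin (K + 1) → Site d × ℝ),
    (∀ m, c m ∈ G) ∧
    p.2 < (c 0).2 ∧
    (∀ m : Fin K, (c m.castSucc).2 < (c m.succ).2) ∧
    (c (Fin.last K)).2 ≤ q.2 ∧
    dist1 (c 0).1 p.1 = 1 ∧
    (∀ m : Fin K, dist1 (c m.succ).1 (c m.castSucc).1 = 1) ∧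
    (c (Fin.last K)).1 = q.1

/-!
Run the dynamics through all of `G^U` and through `G^U_{<x}` side by side. Just before each
event time `t`, the two configurations agree at `x` and at every site `z` with
`(z, t) <_G (x, T_x)`. An event kept in `G^U_{<x}` sees agreeing neighbours, because each
neighbour precedes the event and hence `(x, T_x)`; an event dropped from `G^U_{<x}` only changes a
site that can no longer influence `(x, T_x)`. Agreement at `x` survives past `T_x` because no
event touches `x` afterwards.
-/

section Locality

variable {d : ℕ}

lemma dist1_comm (x y : Site d) : dist1 x y = dist1 y x := by
  simp only [dist1, abs_sub_comm]

lemma step_apply_of_ne (cplus : Site d → Config d → ℝ) (η : Config d) (x : Site d) (u : ℝ)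
    {y : Site d} (h : y ≠ x) : step cplus η x u y = η y := by
  simp [step, h]

lemma applyEvents_apply_of_forall_ne (cplus : Site d → Config d → ℝ) {x : Site d} :
    ∀ {l : List (Event d)} (η : Config d), (∀ e ∈ l, e.1 ≠ x) →
      applyEvents cplus η l x = η x
  | [], _, _ => rfl
  | e :: l, η, h => by
    rw [applyEvents, applyEvents_apply_of_forall_ne cplus _ fun e' he' => h e' (.tail _ he'),
      step_apply_of_ne _ _ _ _ (h e (.head _)).symm]

lemma rel_of_le_time {G : Set (Site d × ℝ)} {z : Site d} {t t' : ℝ} {q : Site d × ℝ}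
    (h : t ≤ t') (hr : rel G (z, t') q) : rel G (z, t) q := by
  rcases hr with ⟨hz, ht⟩ | ⟨K, c, hG, ht, hc⟩
  · exact .inl ⟨hz, h.trans_lt ht⟩
  · exact .inr ⟨K, c, hG, h.trans_lt ht, hc⟩

def Influences (G : Set (Site d × ℝ)) (p q : Site d × ℝ) : Prop :=
  p = q ∨ rel G p q

lemma influences_of_le_time (G : Set (Site d × ℝ)) (x : Site d) {t T : ℝ} (h : t ≤ T) :
    Influences G (x, t) (x, T) := by
  rcases h.lt_or_eq with h | rfl
  · exact .inr (.inl ⟨rfl, h⟩)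
  · exact .inl rfl

-- Prepend `p` to the path witnessing `Influences G p q`.
lemma rel_of_influences_of_adjacent {G : Set (Site d × ℝ)} {p q : Site d × ℝ} {z : Site d}
    {t : ℝ} (hp : p ∈ G) (hdist : dist1 p.1 z = 1) (ht : t < p.2) (h : Influences G p q) :
    rel G (z, t) q := by
  have single : p.1 = q.1 → p.2 ≤ q.2 → rel G (z, t) q := fun h1 h2 =>
    .inr ⟨0, fun _ => p, fun _ => hp, ht, finZeroElim, h2, hdist, finZeroElim, h1⟩
  rcases h with rfl | ⟨h1, h2⟩ | ⟨K, c, hG, hc0, hmono, hlast, hd0, hdist', hend⟩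
  · exact single rfl le_rfl
  · exact single h1 h2.le
  · refine .inr ⟨K + 1, Fin.cons p c, ?_, ht, ?_, ?_, hdist, ?_, ?_⟩
    · exact Fin.cases hp hG
    · exact Fin.cases hc0 fun j => by simpa [← Fin.succ_castSucc] using hmono j
    · simpa [← Fin.succ_last] using hlast
    · exact Fin.cases hd0 fun j => by simpa [← Fin.succ_castSucc] using hdist' j
    · simpa [← Fin.succ_last] using hend

lemma applyEvents_apply_eq_filter {cplus : Site d → Config d → ℝ}
    (hNN : ∀ (x : Site d) (η η' : Config d),
      (∀ y, dist1 y x = 1 → η y = η' y) → cplus x η = cplus x η')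
    {G : Set (Site d × ℝ)} {x : Site d} {Tx : ℝ}
    [DecidablePred fun e : Event d => Influences G (e.1, e.2.1) (x, Tx)]
    (hmax : ∀ t, (x, t) ∈ G → t ≤ Tx) {l : List (Event d)}
    (hsort : l.Pairwise fun a b => a.2.1 < b.2.1) (hG : ∀ e ∈ l, (e.1, e.2.1) ∈ G) {t₀ : ℝ}
    (ht₀ : ∀ e ∈ l, t₀ < e.2.1) {η η' : Config d}
    (hagree : ∀ z, z = x ∨ rel G (z, t₀) (x, Tx) → η z = η' z) :
    applyEvents cplus η l x =
      applyEvents cplus η' (l.filter fun e => Influences G (e.1, e.2.1) (x, Tx)) x := by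
  induction l generalizing t₀ η η' with
  | nil => exact hagree x (.inl rfl)
  | cons e l ih =>
    obtain ⟨hsort_e, hsort⟩ := List.pairwise_cons.1 hsort
    have hGe := hG e (.head _)
    have ht₀e := ht₀ e (.head _)
    have hagree_later : ∀ z, z = x ∨ rel G (z, e.2.1) (x, Tx) → η z = η' z :=
      fun z hz => hagree z (hz.imp_right (rel_of_le_time ht₀e.le))
    rw [List.filter_cons]
    split_ifs with he
    · refine ih hsort (fun f hf => hG f (.tail _ hf)) hsort_e fun z hz => ?_
      by_cases hze : z = e.1
      · have hneighbours : ∀ w, dist1 w e.1 = 1 → η w = η' w := fun w hw =>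
          hagree w (.inr (rel_of_influences_of_adjacent hGe ((dist1_comm _ _).trans hw) ht₀e
            (by simpa using he)))
        simp [step, hze, hNN _ _ _ hneighbours]
      · rw [step_apply_of_ne _ _ _ _ hze, step_apply_of_ne _ _ _ _ hze]
        exact hagree_later z hz
    · refine ih hsort (fun f hf => hG f (.tail _ hf)) hsort_e fun z hz => ?_
      have hze : z ≠ e.1 := by
        rintro rfl
        refine he (decide_eq_true ?_)
        rcases hz with rfl | hz
        · exact influences_of_le_time G _ (hmax _ hGe)
        · exact .inr hz
      rw [step_apply_of_ne _ _ _ _ hze]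
      exact hagree_later z hz

end Locality

theorem stmt2_general {d : ℕ} (cplus : Site d → Config d → ℝ)
    (hNN : ∀ (x : Site d) (η η' : Config d),
      (∀ y, dist1 y x = 1 → η y = η' y) → cplus x η = cplus x η')
    (l : List (Event d))
    (hsort : l.Pairwise (fun a b => a.2.1 < b.2.1))
    (htime : ∀ e ∈ l, 0 ≤ e.2.1)
    (x : Site d) (η : Config d) :
    ((∀ e ∈ l, e.1 ≠ x) → applyEvents cplus η l x = η x) ∧
    (∀ Tx : ℝ, (x, Tx) ∈ projG l → (∀ t : ℝ, (x, t) ∈ projG l → t ≤ Tx) →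
      ∀ l' : List (Event d), l'.Sublist l →
        (∀ e : Event d, e ∈ l' ↔ (e ∈ l ∧
            ((e.1, e.2.1) = (x, Tx) ∨ rel (projG l) (e.1, e.2.1) (x, Tx)))) →
        applyEvents cplus η l x = applyEvents cplus η l' x) := by
  refine ⟨applyEvents_apply_of_forall_ne cplus η, fun Tx _ hmax l' hsub hl' => ?_⟩
  classical
  have hnodup : l.Nodup := hsort.imp fun h => ne_of_apply_ne (·.2.1) h.ne
  have hl'_eq : l' = l.filter fun e => Influences (projG l) (e.1, e.2.1) (x, Tx) := by
    refine (hnodup.perm_iff_eq_of_sublist hsub List.filter_sublist).1 ?_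
    refine (List.perm_ext_iff_of_nodup (hnodup.sublist hsub) (hnodup.filter _)).2 fun e => ?_
    simp [hl', Influences]
  rw [hl'_eq]
  exact applyEvents_apply_eq_filter hNN hmax hsort (fun e he => ⟨e.2.2, he⟩) (t₀ := -1)
    (fun e he => by linarith [htime e he]) fun _ _ => rfl

/-- Locality of the graphical construction (Lemma 5.1):
`Ψ(η, G^U)(x) = Ψ(η, G^U_{<x})(x)`, where `G^U_{<x}` consists of the events `(y,s,u)` of
`G^U` with `(y,s) = (x,T_x)` or `(y,s) <_G (x,T_x)`, `T_x` being the largest time of an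
event of `G` at site `x`; if there is no event at site `x` then `G^U_{<x} = ∅`. -/
theorem stmt2 {d : ℕ} (hd : 1 ≤ d) (cplus : Site d → Config d → ℝ)
    (hrange : ∀ x η, cplus x η ∈ Set.Icc (0 : ℝ) 1)
    (hNN : ∀ (x : Site d) (η η' : Config d),
      (∀ y, dist1 y x = 1 → η y = η' y) → cplus x η = cplus x η')
    (l : List (Event d))
    (hsort : l.Pairwise (fun a b => a.2.1 < b.2.1))
    (htime : ∀ e ∈ l, 0 ≤ e.2.1)
    (hu : ∀ e ∈ l, e.2.2 ∈ Set.Icc (0 : ℝ) 1)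
    (x : Site d) (η : Config d) :
    ((∀ e ∈ l, e.1 ≠ x) → applyEvents cplus η l x = η x) ∧
    (∀ Tx : ℝ, (x, Tx) ∈ projG l → (∀ t : ℝ, (x, t) ∈ projG l → t ≤ Tx) →
      ∀ l' : List (Event d), l'.Sublist l →
        (∀ e : Event d, e ∈ l' ↔ (e ∈ l ∧
            ((e.1, e.2.1) = (x, Tx) ∨ rel (projG l) (e.1, e.2.1) (x, Tx)))) →
        applyEvents cplus η l x = applyEvents cplus η l' x) :=
  stmt2_general cplus hNN l hsort htime x η
end

section
/- Telescoping square bound (deterministic core of Lemma 6.2): let f : Ω → ℝ, ξ ∈ Ω, x, x₁, …, x_n ∈ ℤ^d and u, u₁, …, u_n ∈ [0,1]. Define ξ₀ := ξ, ξ̃₀ := Ψ(ξ,(x,u)), and recursively ξ_k := Ψ(ξ_{k−1},(x_k,u_k)) and ξ̃_k := Ψ(ξ̃_{k−1},(x_k,u_k)) for 1 ≤ k ≤ n. Then (f(ξ̃_n) − f(ξ_n))² ≤ (2n+1)·[ Σ_{k=1}^n (∇_{x_k} f(ξ̃_{k−1}))² + Σ_{k=1}^n (∇_{x_k} f(ξ_{k−1}))²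 + (∇_x f(ξ))² ]. -/
/-- The configuration `η` flipped at site `x`. -/
def flipAt {d : ℕ} (η : Config d) (x : Site d) : Config d :=
  fun y => if y = x then !(η y) else η y

/-- `∇_x f(η) = f(η^x) − f(η)`. -/
def grad {d : ℕ} (x : Site d) (f : Config d → ℝ) (η : Config d) : ℝ :=
  f (flipAt η x) - f η

open Finset

theorem sq_sum_add_sum_add_le_card_mul {ι κ : Type*} (s : Finset ι) (t : Finset κ)
    (f : ι → ℝ) (g : κ → ℝ) (c : ℝ) :
    (∑ i ∈ s, f i + ∑ j ∈ t, g j + c) ^ 2 ≤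
      (#s + #t + 1) * (∑ i ∈ s, f i ^ 2 + ∑ j ∈ t, g j ^ 2 + c ^ 2) := by
  have h := sq_sum_le_card_mul_sum_sq (s := insertNone (s.disjSum t))
    (f := fun o => o.elim c (Sum.elim f g))
  simp only [sum_insertNone, sum_disjSum, card_insertNone, card_disjSum, Option.elim_none,
    Option.elim_some, Sum.elim_inl, Sum.elim_inr, Nat.cast_add, Nat.cast_one] at h
  linarith

theorem sq_sub_le_sum_sq_increments (a b : ℕ → ℝ) (n : ℕ) :
    (a n - b n) ^ 2 ≤
      (2 * n + 1) * (∑ k ∈ range n, (a (k + 1) - a k) ^ 2 +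
        ∑ k ∈ range n, (b (k + 1) - b k) ^ 2 + (a 0 - b 0) ^ 2) := by
  have htelescope : a n - b n = ∑ k ∈ range n, (a (k + 1) - a k) +
      ∑ k ∈ range n, -(b (k + 1) - b k) + (a 0 - b 0) := by
    rw [sum_range_sub, sum_neg_distrib, sum_range_sub]
    ring
  have h := sq_sum_add_sum_add_le_card_mul (range n) (range n)
    (fun k => a (k + 1) - a k) (fun k => -(b (k + 1) - b k)) (a 0 - b 0)
  simp only [card_range, neg_sq] at h
  rw [htelescope]
  linarith

theorem step_eq_self_or_flipAt {d : ℕ} (cplus : Site d → Config d → ℝ) (η : Config d)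
    (x : Site d) (u : ℝ) : step cplus η x u = η ∨ step cplus η x u = flipAt η x := by
  by_cases h : (u < cplus x η) ↔ η x = true
  · left
    funext y
    by_cases hy : y = x
    · subst hy
      cases hη : η y <;> simp_all [step]
    · simp [step, hy]
  · right
    funext y
    by_cases hy : y = x
    · subst hy
      cases hη : η y <;> simp_all [step, flipAt]
    · simp [step, flipAt, hy]

theorem sq_sub_step_le_sq_grad {d : ℕ} (cplus : Site d → Config d → ℝ) (f : Config d → ℝ)
    (η : Config d) (x : Site d) (u : ℝ) :
    (f (step cplus η x u) - f η) ^ 2 ≤ grad x f η ^ 2 := by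
  rcases step_eq_self_or_flipAt cplus η x u with h | h <;> rw [h]
  · simpa using sq_nonneg (grad x f η)
  · rfl

theorem stmt5_general {d : ℕ} (cplus : Site d → Config d → ℝ)
    (f : Config d → ℝ) (ξ : Config d) (n : ℕ)
    (x : Site d) (xs : ℕ → Site d) (u : ℝ) (us : ℕ → ℝ)
    (ξseq ξtseq : ℕ → Config d)
    (hξ0 : ξseq 0 = ξ) (hξt0 : ξtseq 0 = step cplus ξ x u)
    (hξ : ∀ k, k < n → ξseq (k + 1) = step cplus (ξseq k) (xs (k + 1)) (us (k + 1)))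
    (hξt : ∀ k, k < n → ξtseq (k + 1) = step cplus (ξtseq k) (xs (k + 1)) (us (k + 1))) :
    (f (ξtseq n) - f (ξseq n)) ^ 2 ≤
      (2 * n + 1) *
        ((∑ k ∈ Finset.range n, (grad (xs (k + 1)) f (ξtseq k)) ^ 2) +
         (∑ k ∈ Finset.range n, (grad (xs (k + 1)) f (ξseq k)) ^ 2) +
         (grad x f ξ) ^ 2) := by
  refine (sq_sub_le_sum_sq_increments (f ∘ ξtseq) (f ∘ ξseq) n).trans ?_
  simp only [Function.comp_apply]
  gcongr _ * (∑ k ∈ range n, ?_ + ∑ k ∈ range n, ?_ + ?_) with k hk k hk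
  · rw [hξt k (mem_range.mp hk)]
    exact sq_sub_step_le_sq_grad ..
  · rw [hξ k (mem_range.mp hk)]
    exact sq_sub_step_le_sq_grad ..
  · rw [hξt0, hξ0]
    exact sq_sub_step_le_sq_grad ..

/-- Telescoping square bound (deterministic core of Lemma 6.2). -/
theorem stmt5 {d : ℕ} (hd : 1 ≤ d) (cplus : Site d → Config d → ℝ)
    (f : Config d → ℝ) (ξ : Config d) (n : ℕ)
    (x : Site d) (xs : ℕ → Site d) (u : ℝ) (us : ℕ → ℝ)
    (hu : u ∈ Set.Icc (0 : ℝ) 1) (hus : ∀ k, 1 ≤ k → k ≤ n → us k ∈ Set.Icc (0 : ℝ) 1)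
    (ξseq ξtseq : ℕ → Config d)
    (hξ0 : ξseq 0 = ξ) (hξt0 : ξtseq 0 = step cplus ξ x u)
    (hξ : ∀ k, k < n → ξseq (k + 1) = step cplus (ξseq k) (xs (k + 1)) (us (k + 1)))
    (hξt : ∀ k, k < n → ξtseq (k + 1) = step cplus (ξtseq k) (xs (k + 1)) (us (k + 1))) :
    (f (ξtseq n) - f (ξseq n)) ^ 2 ≤
      (2 * n + 1) *
        ((∑ k ∈ Finset.range n, (grad (xs (k + 1)) f (ξtseq k)) ^ 2) +
         (∑ k ∈ Finset.range n, (grad (xs (k + 1)) f (ξseq k)) ^ 2) +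
         (grad x f ξ) ^ 2) :=
  stmt5_general cplus f ξ n x xs u us ξseq ξtseq hξ0 hξt0 hξ hξt
end
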